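/- For the universal flop of length two, the endomorphism matrices a = [[0,1,0,0],[−u,0,0,0],[−2v,0,0,1],[0,2v,−u,0]] and b = [[0,0,1,0],[0,0,0,−1],[−w,0,0,0],[0,w,0,0]] each commute with the matrix Φ = xI − Ξ (with Ξ as in the universal length-two matrix factorization), i.e. aΦ = Φa and bΦ = Φb. -/

import Mathlib

open MvPolynomial

noncomputable section

abbrev S7 : Type := MvPolynomial (Fin 7) ℂ

def x7 : S7 := X 0
def y7 : S7 := X 1
def z7 : S7 := X 2
def w7 : S7 := X 3
def u7 : S7 := X 4
def v7 : S7 := X 5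
def t7 : S7 := X 6

def Xi7 : Matrix (Fin 4) (Fin 4) S7 :=
  !![-v7*t7, y7, z7, t7;
     -u7*y7 - 2*v7*z7, v7*t7, -u7*t7, z7;
     -w7*z7, w7*t7, -v7*t7, -y7;
     -u7*w7*t7, -w7*z7, u7*y7 + 2*v7*z7, v7*t7]

def Phi7 : Matrix (Fin 4) (Fin 4) S7 := x7 • (1 : Matrix (Fin 4) (Fin 4) S7) - Xi7

def a7 : Matrix (Fin 4) (Fin 4) S7 :=
  !![0, 1, 0, 0; -u7, 0, 0, 0; -2*v7, 0, 0, 1; 0, 2*v7, -u7, 0]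

def b7 : Matrix (Fin 4) (Fin 4) S7 :=
  !![0, 0, 1, 0; 0, 0, 0, -1; -w7, 0, 0, 0; 0, w7, 0, 0]

theorem Commute.smul_one_sub_right {R A : Type*} [CommSemiring R] [Ring A] [Algebra R A]
    {a b : A} (h : Commute a b) (c : R) : Commute a (c • 1 - b) :=
  ((Commute.one_right a).smul_right c).sub_right h

theorem commute_a7_Xi7 : Commute a7 Xi7 := by
  ext i j : 1
  fin_cases i <;> fin_cases j <;>
    simp only [a7, Xi7, Matrix.mul_apply, Fin.sum_univ_four, Matrix.of_apply, Fin.zero_eta,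
      Fin.mk_one, Fin.reduceFinMk, Matrix.cons_val] <;>
    ring

theorem commute_b7_Xi7 : Commute b7 Xi7 := by
  ext i j : 1
  fin_cases i <;> fin_cases j <;>
    simp only [b7, Xi7, Matrix.mul_apply, Fin.sum_univ_four, Matrix.of_apply, Fin.zero_eta,
      Fin.mk_one, Fin.reduceFinMk, Matrix.cons_val] <;>
    ring

theorem endomorphisms_commute_with_Phi :
    a7 * Phi7 = Phi7 * a7 ∧ b7 * Phi7 = Phi7 * b7 :=
  ⟨(commute_a7_Xi7.smul_one_sub_right x7).eq, (commute_b7_Xi7.smul_one_sub_right x7).eq⟩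

end
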